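/- Let φ : ℝ × ℝ^d → ℝ be continuous with y₀ ↦ φ(y₀, y) strictly increasing for each y, let x ∈ ℝ and y ∈ ℝ^d, and suppose ξ ∈ ℝ satisfies φ(ξ, y) = x. Then the preintegration of the put payoff against the standard normal density reduces to an integral over a half-line: ∫_ℝ max(x − φ(y₀, y), 0) ρ(y₀) dy₀ = ∫_{−∞}^{ξ} (x − φ(y₀, y)) ρ(y₀) dy₀, where ρ(t) = e^{−t²/2}/√(2π), provided y₀ ↦ φ(y₀,y)ρ(y₀) is integrable on (−∞, ξ]. -/

import Mathlib

open Real Filter MeasureTheory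

/-- The standard normal probability density `ρ(t) = e^{−t²/2}/√(2π)`. -/
noncomputable def gauss (t : ℝ) : ℝ := Real.exp (-t ^ 2 / 2) / Real.sqrt (2 * Real.pi)

/-- The standard normal cumulative distribution function `Φ(u) = ∫_{−∞}^u ρ(t) dt`. -/
noncomputable def normCdf (u : ℝ) : ℝ := ∫ t in Set.Iic u, gauss t

/-- The indicator `ind(z) = 1` if `z ≥ 0` and `0` otherwise. -/
noncomputable def indf (z : ℝ) : ℝ := if 0 ≤ z then 1 else 0

/-! Since `φ(·, y)` is monotone with `φ(ξ, y) = x`, the function `x - φ(·, y)` is nonnegative on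
`(-∞, ξ]` and nonpositive on `[ξ, ∞)`, so its positive part is its restriction to `(-∞, ξ]`
and the two integrands agree pointwise. -/

theorem Monotone.max_sub_zero_eq_indicator_Iic {α β : Type*} [LinearOrder α]
    [AddCommGroup β] [LinearOrder β] [IsOrderedAddMonoid β] {f : α → β} (hf : Monotone f)
    {x : β} {ξ : α} (hξ : f ξ = x) :
    (fun t => max (x - f t) 0) = (Set.Iic ξ).indicator fun t => x - f t := by
  funext t
  rcases le_or_gt t ξ with hle | hgt
  · rw [Set.indicator_of_mem (Set.mem_Iic.mpr hle), max_eq_left (sub_nonneg.mpr (hξ ▸ hf hle))]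
  · rw [Set.indicator_of_notMem (Set.notMem_Iic.mpr hgt),
      max_eq_right (sub_nonpos.mpr (hξ ▸ hf hgt.le))]

theorem Monotone.integral_max_sub_zero_mul_eq_setIntegral_Iic {α : Type*} [LinearOrder α]
    [TopologicalSpace α] [OrderClosedTopology α] [MeasurableSpace α] [OpensMeasurableSpace α]
    {μ : Measure α} {f g : α → ℝ} (hf : Monotone f) {x : ℝ} {ξ : α} (hξ : f ξ = x) :
    ∫ t, max (x - f t) 0 * g t ∂μ = ∫ t in Set.Iic ξ, (x - f t) * g t ∂μ := by
  rw [← integral_indicator measurableSet_Iic]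
  simp_rw [Set.indicator_mul_left, ← hf.max_sub_zero_eq_indicator_Iic hξ]

theorem stmt13_general (d : ℕ) (φ : ℝ → (Fin d → ℝ) → ℝ)
    (hmono : ∀ y : Fin d → ℝ, StrictMono fun t : ℝ => φ t y)
    (x : ℝ) (y : Fin d → ℝ) (ξ : ℝ) (hξ : φ ξ y = x) :
    ∫ t : ℝ, max (x - φ t y) 0 * gauss t = ∫ t in Set.Iic ξ, (x - φ t y) * gauss t :=
  (hmono y).monotone.integral_max_sub_zero_mul_eq_setIntegral_Iic hξ

/-- if `φ` is continuous, strictly increasing in its first variable,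
`φ(ξ,y) = x`, and `y₀ ↦ φ(y₀,y)ρ(y₀)` is integrable on `(−∞,ξ]`, then
`∫_ℝ max(x − φ(y₀,y), 0) ρ(y₀) dy₀ = ∫_{−∞}^{ξ} (x − φ(y₀,y)) ρ(y₀) dy₀`. -/
theorem stmt13 (d : ℕ) (φ : ℝ → (Fin d → ℝ) → ℝ)
    (hcont : Continuous fun p : ℝ × (Fin d → ℝ) => φ p.1 p.2)
    (hmono : ∀ y : Fin d → ℝ, StrictMono fun t : ℝ => φ t y)
    (x : ℝ) (y : Fin d → ℝ) (ξ : ℝ) (hξ : φ ξ y = x)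
    (hint : IntegrableOn (fun t : ℝ => φ t y * gauss t) (Set.Iic ξ)) :
    ∫ t : ℝ, max (x - φ t y) 0 * gauss t = ∫ t in Set.Iic ξ, (x - φ t y) * gauss t :=
  stmt13_general d φ hmono x y ξ hξ
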